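/- (McDiarmid's inequality) Let S = (Z_1,...,Z_m) be i.i.d. random variables and Φ : Z^m → ℝ a measurable function such that replacing the i-th coordinate changes the value of Φ by at most o_i. Then for every ε > 0, P[Φ(S) - E[Φ(S)] ≥ ε] ≤ exp(-2ε² / Σ_{i=1}^m o_i²). -/

import Mathlib

/-! Write `x = (z, y)` with `z` the first coordinate and let `Ψ y = ∫ Φ (z, y) dμ₀(z)`. Then
`Φ - 𝔼Φ = (Φ - Ψ) + (Ψ - 𝔼Ψ)`. For fixed `y` the first summand is centred in `z` and ranges over
an interval of length `o₀`, so by Hoeffding's lemma its mgf is at most `exp (o₀² t² / 8)`; and `Ψ`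
again has bounded differences `o₁, …, oₘ₋₁`. Integrating out `z` first and inducting on `m`,
`Φ - 𝔼Φ` is sub-Gaussian with variance proxy `∑ oᵢ² / 4`, and the Chernoff bound gives
`exp (-2ε² / ∑ oᵢ²)`. -/

open MeasureTheory ProbabilityTheory Real
open scoped NNReal

def HasBoundedDifferences {ι α : Type*} [DecidableEq ι] (Φ : (ι → α) → ℝ) (o : ι → ℝ) : Prop :=
  ∀ (i : ι) (x : ι → α) (z : α), |Φ x - Φ (Function.update x i z)| ≤ o i

lemma exists_forall_mem_Icc_of_sub_le {ι : Type*} [Nonempty ι] {f : ι → ℝ} {c : ℝ}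
    (h : ∀ x y, f x - f y ≤ c) : ∃ a, ∀ x, f x ∈ Set.Icc a (a + c) := by
  obtain ⟨x₀⟩ := ‹Nonempty ι›
  have hbdd : BddBelow (Set.range f) := ⟨f x₀ - c, by rintro _ ⟨y, rfl⟩; linarith [h x₀ y]⟩
  refine ⟨⨅ x, f x, fun x => ⟨ciInf_le hbdd x, ?_⟩⟩
  have : f x - c ≤ ⨅ y, f y := le_ciInf fun y => by linarith [h x y]
  linarith

namespace ProbabilityTheory

lemma hasSubgaussianMGF_sub_integral_of_sub_le {Ω : Type*} [MeasurableSpace Ω] {μ : Measure Ω}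
    [IsProbabilityMeasure μ] {f : Ω → ℝ} {c : ℝ} (hf : AEMeasurable f μ)
    (h : ∀ x y, f x - f y ≤ c) :
    HasSubgaussianMGF (fun x => f x - μ[f]) ((‖c‖₊ / 2) ^ 2) μ := by
  have := nonempty_of_isProbabilityMeasure μ
  obtain ⟨a, ha⟩ := exists_forall_mem_Icc_of_sub_le h
  simpa using hasSubgaussianMGF_of_mem_Icc hf (ae_of_all _ ha)

namespace HasSubgaussianMGF

variable {α β : Type*} [MeasurableSpace α] [MeasurableSpace β]

lemma of_measurePreserving {μ : Measure α} {ν : Measure β} {e : α ≃ᵐ β}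
    (he : MeasurePreserving e μ ν) {X : β → ℝ} {c : ℝ≥0} (h : HasSubgaussianMGF (X ∘ e) c μ) :
    HasSubgaussianMGF X c ν := by
  rw [← (he.symm e).map_eq] at h
  simpa [Function.comp_def] using h.of_map e.symm.measurable.aemeasurable

lemma prod_add {μ : Measure α} {ν : Measure β} [SFinite μ] [SFinite ν] {F : α × β → ℝ}
    {G : β → ℝ} {cF cG : ℝ≥0} (hF : ∀ y, HasSubgaussianMGF (fun x => F (x, y)) cF μ)
    (hG : HasSubgaussianMGF G cG ν)
    (hint : ∀ t, Integrable (fun p => exp (t * (F p + G p.2))) (μ.prod ν)) :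
    HasSubgaussianMGF (fun p => F p + G p.2) (cF + cG) (μ.prod ν) where
  integrable_exp_mul := hint
  mgf_le t := calc
    mgf (fun p => F p + G p.2) (μ.prod ν) t
        = ∫ y, mgf (fun x => F (x, y)) μ t * exp (t * G y) ∂ν := by
      rw [mgf, integral_prod_symm _ (hint t)]
      simp_rw [mul_add, exp_add, integral_mul_const, mgf]
    _ ≤ ∫ y, exp (cF * t ^ 2 / 2) * exp (t * G y) ∂ν := by
      refine integral_mono_of_nonneg (ae_of_all _ fun y => ?_)
        ((hG.integrable_exp_mul t).const_mul _) (ae_of_all _ fun y => ?_)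
      · exact mul_nonneg mgf_nonneg (exp_nonneg _)
      · exact mul_le_mul_of_nonneg_right ((hF y).mgf_le t) (exp_nonneg _)
    _ = exp (cF * t ^ 2 / 2) * mgf G ν t := integral_const_mul _ _
    _ ≤ exp (cF * t ^ 2 / 2) * exp (cG * t ^ 2 / 2) := by gcongr; exact hG.mgf_le t
    _ = exp (↑(cF + cG) * t ^ 2 / 2) := by rw [← exp_add]; push_cast; congr 1; ring

end HasSubgaussianMGF

end ProbabilityTheory

section FinCons

variable {α : Type*} [MeasurableSpace α]

lemma piFinSuccAbove_zero_symm_eq_cons {m : ℕ} :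
    ⇑(MeasurableEquiv.piFinSuccAbove (fun _ => α) 0).symm
      = fun p : α × (Fin m → α) => Fin.cons p.1 p.2 := by
  ext p
  simp [MeasurableEquiv.piFinSuccAbove_symm_apply, Fin.insertNthEquiv, Fin.insertNth_zero']

lemma measurable_fin_cons {m : ℕ} :
    Measurable fun p : α × (Fin m → α) => (Fin.cons p.1 p.2 : Fin (m + 1) → α)  := by
  rw [← piFinSuccAbove_zero_symm_eq_cons]
  exact MeasurableEquiv.measurable _

lemma measurePreserving_piFinSuccAbove_zero_symm {m : ℕ} (μ : Fin (m + 1) → Measure α)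
    [∀ i, SigmaFinite (μ i)] :
    MeasurePreserving (MeasurableEquiv.piFinSuccAbove (fun _ => α) 0).symm
      ((μ 0).prod (Measure.pi fun j : Fin m => μ j.succ)) (Measure.pi μ) := by
  simpa only [Fin.zero_succAbove] using (measurePreserving_piFinSuccAbove μ 0).symm

end FinCons

namespace HasBoundedDifferences

variable {α : Type*}

lemma cons {m : ℕ} {Φ : (Fin (m + 1) → α) → ℝ} {o : Fin (m + 1) → ℝ}
    (h : HasBoundedDifferences Φ o) (z : α) :
    HasBoundedDifferences (fun y : Fin m → α => Φ (Fin.cons z y)) (fun i => o i.succ) :=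
  fun i y z' => by simpa only [Fin.cons_update] using h i.succ (Fin.cons z y) z'

lemma cons_sub_cons_le {m : ℕ} {Φ : (Fin (m + 1) → α) → ℝ} {o : Fin (m + 1) → ℝ}
    (h : HasBoundedDifferences Φ o) (y : Fin m → α) (z z' : α) :
    Φ (Fin.cons z y) - Φ (Fin.cons z' y) ≤ o 0 := by
  simpa only [Fin.update_cons_zero] using le_of_abs_le (h 0 (Fin.cons z y) z')

lemma abs_sub_le_sum : ∀ {m : ℕ} {Φ : (Fin m → α) → ℝ} {o : Fin m → ℝ},
    HasBoundedDifferences Φ o → ∀ x y, |Φ x - Φ y| ≤ ∑ i, o i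
  | 0, Φ, o, _, x, y => by simp [Subsingleton.elim x y]
  | m + 1, Φ, o, h, x, y => by
    have hx : |Φ x - Φ (Fin.cons (y 0) (Fin.tail x))| ≤ o 0 := by
      rw [← Fin.update_cons_zero (x 0), Fin.cons_self_tail]
      exact h 0 x (y 0)
    have hy := abs_sub_le_sum (h.cons (y 0)) (Fin.tail x) (Fin.tail y)
    rw [Fin.cons_self_tail] at hy
    calc |Φ x - Φ y| ≤ |Φ x - Φ (Fin.cons (y 0) (Fin.tail x))|
          + |Φ (Fin.cons (y 0) (Fin.tail x)) - Φ y| := abs_sub_le _ _ _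
      _ ≤ ∑ i, o i := by rw [Fin.sum_univ_succ]; exact add_le_add hx hy

lemma mem_Icc {m : ℕ} {Φ : (Fin m → α) → ℝ} {o : Fin m → ℝ} (h : HasBoundedDifferences Φ o)
    (x₀ x : Fin m → α) : Φ x ∈ Set.Icc (Φ x₀ - ∑ i, o i) (Φ x₀ + ∑ i, o i) := by
  have := abs_sub_le_iff.1 (h.abs_sub_le_sum x x₀)
  constructor <;> linarith

lemma integrable_comp {β : Type*} [MeasurableSpace β] {μ : Measure β} [IsFiniteMeasure μ]
    {m : ℕ} {Φ : (Fin m → α) → ℝ} {o : Fin m → ℝ} (h : HasBoundedDifferences Φ o)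
    {g : β → Fin m → α} (hg : AEMeasurable (fun b => Φ (g b)) μ) (x₀ : Fin m → α) :
    Integrable (fun b => Φ (g b)) μ :=
  .of_mem_Icc _ _ hg (ae_of_all _ fun b => h.mem_Icc x₀ (g b))

variable [MeasurableSpace α] {m : ℕ} {Φ : (Fin (m + 1) → α) → ℝ} {o : Fin (m + 1) → ℝ}

lemma integral_cons (μ₀ : Measure α) [IsProbabilityMeasure μ₀] (hΦ : Measurable Φ)
    (h : HasBoundedDifferences Φ o) :
    HasBoundedDifferences (fun y => ∫ z, Φ (Fin.cons z y) ∂μ₀) (fun i => o i.succ) := by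
  intro i y z'
  obtain ⟨z₀⟩ := nonempty_of_isProbabilityMeasure μ₀
  have hint (y : Fin m → α) : Integrable (fun z => Φ (Fin.cons z y)) μ₀ :=
    h.integrable_comp (hΦ.comp (measurable_fin_cons.comp measurable_prodMk_right)).aemeasurable
      (Fin.cons z₀ y)
  rw [← integral_sub (hint y) (hint _), ← Real.norm_eq_abs]
  refine (norm_integral_le_of_norm_le (integrable_const (o i.succ))
    (ae_of_all _ fun z => (h.cons z) i y z')).trans_eq ?_
  simp

lemma measurable_integral_cons (μ₀ : Measure α) [SFinite μ₀] (hΦ : Measurable Φ) :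
    Measurable fun y : Fin m → α => ∫ z, Φ (Fin.cons z y) ∂μ₀ :=
  ((hΦ.comp measurable_fin_cons).stronglyMeasurable.integral_prod_left').measurable

lemma hasSubgaussianMGF_succ {μ : Fin (m + 1) → Measure α} [∀ i, IsProbabilityMeasure (μ i)]
    {c : ℝ≥0} (hΦ : Measurable Φ) (h : HasBoundedDifferences Φ o)
    (hΨ : HasSubgaussianMGF
      (fun y => ∫ z, Φ (Fin.cons z y) ∂μ 0
        - ∫ y', ∫ z, Φ (Fin.cons z y') ∂μ 0 ∂Measure.pi fun j : Fin m => μ j.succ)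
      c (Measure.pi fun j : Fin m => μ j.succ)) :
    HasSubgaussianMGF (fun x => Φ x - ∫ x', Φ x' ∂Measure.pi μ) ((‖o 0‖₊ / 2) ^ 2 + c)
      (Measure.pi μ) := by
  set P := Measure.pi fun j : Fin m => μ j.succ
  set Ψ := fun y => ∫ z, Φ (Fin.cons z y) ∂μ 0
  have he := measurePreserving_piFinSuccAbove_zero_symm μ
  have hΦcons : Measurable fun p : α × (Fin m → α) => Φ (Fin.cons p.1 p.2) :=
    hΦ.comp measurable_fin_cons
  obtain ⟨z₀⟩ := nonempty_of_isProbabilityMeasure (μ 0)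
  have hE : ∫ x, Φ x ∂Measure.pi μ = ∫ y, Ψ y ∂P := by
    rw [← he.integral_comp', piFinSuccAbove_zero_symm_eq_cons]
    exact integral_prod_symm _ (h.integrable_comp hΦcons.aemeasurable fun _ => z₀)
  refine HasSubgaussianMGF.of_measurePreserving he ?_
  rw [piFinSuccAbove_zero_symm_eq_cons]
  refine (HasSubgaussianMGF.prod_add (F := fun p => Φ (Fin.cons p.1 p.2) - Ψ p.2)
    (G := fun y => Ψ y - ∫ y, Ψ y ∂P)
    (fun y => hasSubgaussianMGF_sub_integral_of_sub_le
      (hΦcons.comp measurable_prodMk_right).aemeasurable (h.cons_sub_cons_le y)) hΨ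
    fun t => ?_).congr (ae_of_all _ fun p => ?_)
  · have hΨ₂ : Measurable fun p : α × (Fin m → α) => Ψ p.2 :=
      (measurable_integral_cons (μ 0) hΦ).comp measurable_snd
    refine integrable_exp_mul_of_mem_Icc
      ((hΦcons.sub hΨ₂).add (hΨ₂.sub_const _)).aemeasurable (ae_of_all _ fun p => ?_)
      (a := Φ (fun _ => z₀) - ∑ i, o i - ∫ y, Ψ y ∂P)
      (b := Φ (fun _ => z₀) + ∑ i, o i - ∫ y, Ψ y ∂P)
    have := h.mem_Icc (fun _ => z₀) (Fin.cons p.1 p.2)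
    simp only [Set.mem_Icc] at this ⊢
    constructor <;> linarith
  · simp only [Function.comp_apply, hE]
    ring

theorem hasSubgaussianMGF : ∀ {m : ℕ} {μ : Fin m → Measure α} [∀ i, IsProbabilityMeasure (μ i)]
    {Φ : (Fin m → α) → ℝ} {o : Fin m → ℝ}, Measurable Φ → HasBoundedDifferences Φ o →
    HasSubgaussianMGF (fun x => Φ x - ∫ x', Φ x' ∂Measure.pi μ) (∑ i, (‖o i‖₊ / 2) ^ 2)
      (Measure.pi μ)
  | 0, μ, _, Φ, o, _, _ => by
    have hΦ (x : Fin 0 → α) : Φ x = Φ Fin.elim0 := congrArg Φ (Subsingleton.elim _ _)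
    simp [hΦ]
  | m + 1, μ, _, Φ, o, hΦ, h => by
    rw [Fin.sum_univ_succ]
    exact hasSubgaussianMGF_succ hΦ h
      (hasSubgaussianMGF (measurable_integral_cons (μ 0) hΦ) (h.integral_cons (μ 0) hΦ))

end HasBoundedDifferences

/-- McDiarmid's inequality: let `S = (Z_1,…,Z_m)` be i.i.d. random variables (modelled by
the product measure `ν^m`) and `Φ : Z^m → ℝ` a measurable function satisfying the bounded
differences condition: replacing the `i`-th coordinate changes `Φ` by at most `o i`. Then
for every `ε > 0`,
`P[Φ(S) - E[Φ(S)] ≥ ε] ≤ exp(-2ε² / Σ_i o_i²)`. -/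
theorem mcdiarmid_inequality {𝒵 : Type*} [MeasurableSpace 𝒵] (m : ℕ)
    (ν : Measure 𝒵) [IsProbabilityMeasure ν]
    (Φ : (Fin m → 𝒵) → ℝ) (hΦ : Measurable Φ)
    (o : Fin m → ℝ)
    (hdiff : ∀ (i : Fin m) (x : Fin m → 𝒵) (z' : 𝒵),
      |Φ x - Φ (Function.update x i z')| ≤ o i)
    (ε : ℝ) (hε : 0 < ε) :
    (Measure.pi fun _ : Fin m => ν)
        {x | ε ≤ Φ x - ∫ y, Φ y ∂(Measure.pi fun _ : Fin m => ν)}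
      ≤ ENNReal.ofReal (Real.exp (-2 * ε ^ 2 / ∑ i, (o i) ^ 2)) := by
  have h := HasBoundedDifferences.hasSubgaussianMGF (μ := fun _ => ν) hΦ hdiff
  rw [← ofReal_measureReal]
  refine ENNReal.ofReal_le_ofReal ((h.measure_ge_le hε.le).trans_eq ?_)
  simp only [NNReal.coe_sum, NNReal.coe_pow, NNReal.coe_div, coe_nnnorm, Real.norm_eq_abs,
    NNReal.coe_ofNat, sq_abs, div_pow, ← Finset.sum_div]
  congr 1
  ring
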